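/- Let G_{d₁,d₂,1} = ⟨ℓ_x, u | [ℓ_x, uℓ_xu] = 1, ℓ_x^{d₁} = (uℓ_xu)^{d₂} = 1⟩ with gcd(d₁, d₂) = 1. Then G_{d₁,d₂,1} is abelian, and it is cyclic of order 2d₁d₂. -/

import Mathlib

/-- Relations of G_{d₁,d₂,1} = ⟨ℓ_x, u | [ℓ_x, uℓ_xu] = 1, ℓ_x^{d₁} = (uℓ_xu)^{d₂} = 1⟩,
with ℓ_x = generator 0 and u = generator 1. -/
def orbifoldRels (d₁ d₂ : ℕ) : Set (FreeGroup (Fin 2)) :=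
  let x : FreeGroup (Fin 2) := FreeGroup.of 0
  let u : FreeGroup (Fin 2) := FreeGroup.of 1
  {x * (u * x * u) * x⁻¹ * (u * x * u)⁻¹, x ^ d₁, (u * x * u) ^ d₂}

/-!
Put `w = u ℓ_x u` and `v = ℓ_x⁻¹ u⁻¹`. Then `v² = ℓ_x⁻¹ w⁻¹` with `ℓ_x` and `w` commuting, so
`v^(2 d₁ d₂) = 1` and `ℓ_x^d₂ = v^(-2 d₂)`. Together with `ℓ_x^d₁ = 1` and `gcd(d₁, d₂) = 1` this
makes `ℓ_x`, and then `u = v⁻¹ ℓ_x⁻¹`, a power of `v`: the group is cyclic, generated by `v`.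
Its order is exactly `2 d₁ d₂` because, for `a d₁ + b d₂ = 1`, the assignment
`ℓ_x ↦ -2 d₂ b`, `u ↦ 2 d₂ b - 1` respects the relations in `ℤ/2d₁d₂` and sends `v` to `1`.
-/

open Subgroup

section
variable {G : Type*} [Group G]

theorem Subgroup.mem_of_pow_mem_of_coprime {H : Subgroup G} {x : G} {m n : ℕ}
    (hmn : m.Coprime n) (hm : x ^ m ∈ H) (hn : x ^ n ∈ H) : x ∈ H := by
  obtain ⟨a, b, hab⟩ := Nat.isCoprime_iff_coprime.mpr hmn
  have hx : x = (x ^ m) ^ a * (x ^ n) ^ b := by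
    rw [← zpow_natCast, ← zpow_natCast, ← zpow_mul, ← zpow_mul, ← zpow_add, mul_comm (m : ℤ),
      mul_comm (n : ℤ), hab, zpow_one]
  rw [hx]
  exact mul_mem (zpow_mem hm a) (zpow_mem hn b)

theorem Commute.mul_pow_mul_eq_one {a b : G} (hab : Commute a b) {m n : ℕ} (ha : a ^ m = 1)
    (hb : b ^ n = 1) : (a * b) ^ (m * n) = 1 := by
  rw [hab.mul_pow, pow_mul, ha, mul_comm, pow_mul, hb, one_pow, one_pow, one_mul]

theorem inv_mul_inv_sq (x u : G) : (x⁻¹ * u⁻¹) ^ 2 = x⁻¹ * (u * x * u)⁻¹ := by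
  rw [sq]; group

variable {x u : G} {d₁ d₂ : ℕ}

theorem inv_mul_inv_pow_eq_one (hc : Commute x (u * x * u)) (hx : x ^ d₁ = 1)
    (hw : (u * x * u) ^ d₂ = 1) : (x⁻¹ * u⁻¹) ^ (2 * d₁ * d₂) = 1 := by
  rw [mul_assoc, pow_mul, inv_mul_inv_sq]
  exact hc.inv_inv.mul_pow_mul_eq_one (by rw [inv_pow, hx, inv_one]) (by rw [inv_pow, hw, inv_one])

theorem pow_mem_zpowers_inv_mul_inv (hc : Commute x (u * x * u)) (hw : (u * x * u) ^ d₂ = 1) :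
    x ^ d₂ ∈ zpowers (x⁻¹ * u⁻¹) := by
  have : ((x⁻¹ * u⁻¹) ^ 2) ^ d₂ = (x ^ d₂)⁻¹ := by
    rw [inv_mul_inv_sq, hc.inv_inv.mul_pow, inv_pow, inv_pow, hw, inv_one, mul_one]
  rw [← inv_inv (x ^ d₂), ← this]
  exact inv_mem (pow_mem (pow_mem (mem_zpowers _) 2) d₂)

theorem mem_zpowers_inv_mul_inv (hc : Commute x (u * x * u)) (hx : x ^ d₁ = 1)
    (hw : (u * x * u) ^ d₂ = 1) (h : d₁.Coprime d₂) :
    x ∈ zpowers (x⁻¹ * u⁻¹) ∧ u ∈ zpowers (x⁻¹ * u⁻¹) := by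
  have hxv : x ∈ zpowers (x⁻¹ * u⁻¹) :=
    mem_of_pow_mem_of_coprime h (by rw [hx]; exact one_mem _) (pow_mem_zpowers_inv_mul_inv hc hw)
  refine ⟨hxv, ?_⟩
  simpa using mul_mem (inv_mem (mem_zpowers (x⁻¹ * u⁻¹))) (inv_mem hxv)

end

namespace OrbifoldGroup

variable {d₁ d₂ : ℕ}

def genX (d₁ d₂ : ℕ) : PresentedGroup (orbifoldRels d₁ d₂) := PresentedGroup.of 0

def genU (d₁ d₂ : ℕ) : PresentedGroup (orbifoldRels d₁ d₂) := PresentedGroup.of 1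

theorem commute_genX : Commute (genX d₁ d₂) (genU d₁ d₂ * genX d₁ d₂ * genU d₁ d₂) := by
  have := PresentedGroup.one_of_mem (show _ ∈ orbifoldRels d₁ d₂ from Set.mem_insert _ _)
  simp only [map_mul, map_inv] at this
  exact mul_inv_eq_iff_eq_mul.mp (mul_inv_eq_one.mp this)

theorem genX_pow : genX d₁ d₂ ^ d₁ = 1 :=
  PresentedGroup.one_of_mem (Set.mem_insert_of_mem _ (Set.mem_insert _ _))

theorem genU_mul_genX_mul_genU_pow : (genU d₁ d₂ * genX d₁ d₂ * genU d₁ d₂) ^ d₂ = 1 :=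
  PresentedGroup.one_of_mem (Set.mem_insert_of_mem _ (Set.mem_insert_of_mem _ rfl))

theorem exists_hom_inv_mul_inv_eq_ofAdd_one (h : d₁.Coprime d₂) :
    ∃ φ : PresentedGroup (orbifoldRels d₁ d₂) →* Multiplicative (ZMod (2 * d₁ * d₂)),
      φ ((genX d₁ d₂)⁻¹ * (genU d₁ d₂)⁻¹) = .ofAdd 1 := by
  obtain ⟨a, b, hab⟩ := Nat.isCoprime_iff_coprime.mpr h
  set X : ZMod (2 * d₁ * d₂) := ((-2 * d₂ * b : ℤ) : ZMod (2 * d₁ * d₂))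
  set U : ZMod (2 * d₁ * d₂) := ((2 * d₂ * b - 1 : ℤ) : ZMod (2 * d₁ * d₂))
  have hX : d₁ • X = 0 := by
    rw [nsmul_eq_mul, ← Int.cast_natCast, ← Int.cast_mul, ZMod.intCast_zmod_eq_zero_iff_dvd]
    exact ⟨-b, by push_cast; ring⟩
  have hW : d₂ • (U + X + U) = 0 := by
    rw [nsmul_eq_mul, ← Int.cast_add, ← Int.cast_add, ← Int.cast_natCast, ← Int.cast_mul,
      ZMod.intCast_zmod_eq_zero_iff_dvd]
    exact ⟨-a, by push_cast; linear_combination 2 * (d₂ : ℤ) * hab⟩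
  have hrels : ∀ r ∈ orbifoldRels d₁ d₂,
      FreeGroup.lift ![Multiplicative.ofAdd X, Multiplicative.ofAdd U] r = 1 := by
    rintro r (rfl | rfl | rfl)
    · simp only [map_mul, map_inv]
      exact mul_inv_eq_one.mpr (mul_inv_eq_iff_eq_mul.mpr (mul_comm _ _))
    · simp only [map_pow, FreeGroup.lift_apply_of]
      rw [Matrix.cons_val_zero, ← ofAdd_nsmul, hX, ofAdd_zero]
    · simp only [map_pow, map_mul, FreeGroup.lift_apply_of, Matrix.cons_val_zero,
        Matrix.cons_val_one]
      rw [← ofAdd_add, ← ofAdd_add, ← ofAdd_nsmul, hW, ofAdd_zero]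
  refine ⟨PresentedGroup.toGroup hrels, ?_⟩
  simp only [map_mul, map_inv, genX, genU, PresentedGroup.toGroup.of, Matrix.cons_val_zero,
    Matrix.cons_val_one]
  rw [← ofAdd_neg, ← ofAdd_neg, ← ofAdd_add]
  congr 1
  push_cast [X, U]
  ring

theorem mem_zpowers_inv_genX_mul_inv_genU (h : d₁.Coprime d₂)
    (g : PresentedGroup (orbifoldRels d₁ d₂)) :
    g ∈ zpowers ((genX d₁ d₂)⁻¹ * (genU d₁ d₂)⁻¹) := by
  obtain ⟨hx, hu⟩ := mem_zpowers_inv_mul_inv commute_genX genX_pow genU_mul_genX_mul_genU_pow h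
  refine PresentedGroup.generated_by _ _ (fun j => ?_) g
  fin_cases j
  exacts [hx, hu]

theorem orderOf_inv_genX_mul_inv_genU (h : d₁.Coprime d₂) :
    orderOf ((genX d₁ d₂)⁻¹ * (genU d₁ d₂)⁻¹) = 2 * d₁ * d₂ := by
  refine Nat.dvd_antisymm (orderOf_dvd_of_pow_eq_one
    (inv_mul_inv_pow_eq_one commute_genX genX_pow genU_mul_genX_mul_genU_pow)) ?_
  obtain ⟨φ, hφ⟩ := exists_hom_inv_mul_inv_eq_ofAdd_one h
  have := orderOf_map_dvd φ ((genX d₁ d₂)⁻¹ * (genU d₁ d₂)⁻¹)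
  rwa [hφ, orderOf_ofAdd_eq_addOrderOf, ZMod.addOrderOf_one] at this

end OrbifoldGroup

theorem orbifold_group_cyclic_general (d₁ d₂ : ℕ)
    (h : Nat.Coprime d₁ d₂) :
    (∀ a b : PresentedGroup (orbifoldRels d₁ d₂), a * b = b * a) ∧
    IsCyclic (PresentedGroup (orbifoldRels d₁ d₂)) ∧
    Nat.card (PresentedGroup (orbifoldRels d₁ d₂)) = 2 * d₁ * d₂ := by
  have hgen := OrbifoldGroup.mem_zpowers_inv_genX_mul_inv_genU h
  have hcyc : IsCyclic (PresentedGroup (orbifoldRels d₁ d₂)) := ⟨⟨_, hgen⟩⟩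
  exact ⟨IsCyclic.commGroup.mul_comm, hcyc,
    (orderOf_eq_card_of_forall_mem_zpowers hgen).symm.trans
      (OrbifoldGroup.orderOf_inv_genX_mul_inv_genU h)⟩

/-- With gcd(d₁,d₂) = 1, the group G_{d₁,d₂,1} is abelian and cyclic of order 2d₁d₂. -/
theorem orbifold_group_cyclic (d₁ d₂ : ℕ) (h₁ : 0 < d₁) (h₂ : 0 < d₂)
    (h : Nat.Coprime d₁ d₂) :
    (∀ a b : PresentedGroup (orbifoldRels d₁ d₂), a * b = b * a) ∧
    IsCyclic (PresentedGroup (orbifoldRels d₁ d₂)) ∧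
    Nat.card (PresentedGroup (orbifoldRels d₁ d₂)) = 2 * d₁ * d₂ :=
  orbifold_group_cyclic_general d₁ d₂ h
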